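/- arXiv:1509.00837 — 2 statements merged into one kernel-verified Lean document; each statement's English description precedes it below -/
import Mathlib

section
/- For every δ ∈ (0,1) there exists a constant c > 0, depending only on δ, such that for every subset Λ ⊆ ℝ^{2d} and all points z, ζ ∈ ℝ^{2d} with z ∈ Λ_δ and ζ ∉ (Λ_δ)_δ one has |z − ζ| ≥ c · max(⟨z⟩, ⟨ζ⟩). -/
/-!
Since `z ∈ Λ_δ`, the point `ζ ∉ (Λ_δ)_δ` cannot lie within `δ⟨z⟩` of `z`, so `|z − ζ| ≥ δ⟨z⟩`.
The bracket is `1`-Lipschitz, hence `⟨ζ⟩ ≤ ⟨z⟩ + |z − ζ| ≤ (1 + 1/δ)|z − ζ|`, and `c = δ / (1 + δ)`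
works.
-/

open Real

noncomputable section

/-- The Japanese bracket `⟨z⟩ = (1 + |z|²)^{1/2}`. -/
def jap {n : ℕ} (z : EuclideanSpace ℝ (Fin n)) : ℝ := Real.sqrt (1 + ‖z‖ ^ 2)

/-- The `δ`-neighborhood `Γ_δ = {z : |z − z₀| < δ⟨z₀⟩ for some z₀ ∈ Γ}`. -/
def nbhd {n : ℕ} (Γ : Set (EuclideanSpace ℝ (Fin n))) (δ : ℝ) :
    Set (EuclideanSpace ℝ (Fin n)) :=
  {z | ∃ z₀ ∈ Γ, ‖z - z₀‖ < δ * jap z₀}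

section

variable {n : ℕ}

lemma jap_nonneg (z : EuclideanSpace ℝ (Fin n)) : 0 ≤ jap z :=
  Real.sqrt_nonneg _

lemma jap_le_jap_add_norm_sub (z ζ : EuclideanSpace ℝ (Fin n)) :
    jap ζ ≤ jap z + ‖z - ζ‖ := by
  have hζ : ‖ζ‖ ≤ ‖z‖ + ‖z - ζ‖ := norm_le_norm_add_norm_sub z ζ
  have hz : ‖z‖ ≤ jap z := Real.le_sqrt_of_sq_le (by linarith)
  have hz_sq : jap z ^ 2 = 1 + ‖z‖ ^ 2 := Real.sq_sqrt (by positivity)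
  rw [jap, Real.sqrt_le_iff]
  refine ⟨by positivity [jap_nonneg z], ?_⟩
  nlinarith [norm_nonneg ζ, norm_nonneg z, norm_nonneg (z - ζ)]

lemma mul_jap_le_norm_sub_of_notMem_nbhd {Γ : Set (EuclideanSpace ℝ (Fin n))} {δ : ℝ}
    {z ζ : EuclideanSpace ℝ (Fin n)} (hz : z ∈ Γ) (hζ : ζ ∉ nbhd Γ δ) :
    δ * jap z ≤ ‖z - ζ‖ := by
  rw [norm_sub_rev]
  by_contra! h
  exact hζ ⟨z, hz, h⟩

lemma div_one_add_mul_max_jap_le_norm_sub {δ : ℝ} (hδ : 0 < δ) {z ζ : EuclideanSpace ℝ (Fin n)}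
    (h : δ * jap z ≤ ‖z - ζ‖) :
    δ / (1 + δ) * max (jap z) (jap ζ) ≤ ‖z - ζ‖ := by
  rw [div_mul_eq_mul_div, div_le_iff₀ (by positivity), max_def]
  have hlip := jap_le_jap_add_norm_sub z ζ
  have hz := jap_nonneg z
  split_ifs <;> nlinarith [norm_nonneg (z - ζ)]

end

theorem statement7_general (d : ℕ) (δ : ℝ) (hδ0 : 0 < δ) :
    ∃ c : ℝ, 0 < c ∧
      ∀ (Λ : Set (EuclideanSpace ℝ (Fin (2 * d))))
        (z ζ : EuclideanSpace ℝ (Fin (2 * d))),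
        z ∈ nbhd Λ δ → ζ ∉ nbhd (nbhd Λ δ) δ →
        c * max (jap z) (jap ζ) ≤ ‖z - ζ‖ :=
  ⟨δ / (1 + δ), by positivity, fun _ _ _ hz hζ =>
    div_one_add_mul_max_jap_le_norm_sub hδ0 (mul_jap_le_norm_sub_of_notMem_nbhd hz hζ)⟩

theorem statement7 (d : ℕ) (δ : ℝ) (hδ0 : 0 < δ) (hδ1 : δ < 1) :
    ∃ c : ℝ, 0 < c ∧
      ∀ (Λ : Set (EuclideanSpace ℝ (Fin (2 * d))))
        (z ζ : EuclideanSpace ℝ (Fin (2 * d))),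
        z ∈ nbhd Λ δ → ζ ∉ nbhd (nbhd Λ δ) δ →
        c * max (jap z) (jap ζ) ≤ ‖z - ζ‖ :=
  statement7_general d δ hδ0
end
end

section
/- Let χ₁, χ₂ : ℝ^{2d} → ℝ^{2d} be bi-Lipschitz bijections, and let k₁, k₂ : ℝ^{2d} × ℝ^{2d} → ℂ be measurable functions such that for every s ≥ 0 there are constants C₁(s), C₂(s) with |k_i(w,z)| ≤ C_i(s) ⟨z − χ_i(w)⟩^{-s} for all w, z ∈ ℝ^{2d}, i = 1, 2. Then for every s ≥ 0 there is a constant C(s) — which can be taken of the form C₀(s)·C₁(s')·C₂(s') for a suitable s' ≥ s, with C₀(s) depending only on s, d, and the Lipschitz constants of χ₁ and χ₁^{-1} — such that |∫_{ℝ^{2d}} k₁(u,z) k₂(w,u) du| ≤ C(s) ⟨z − (χ₁∘χ₂)(w)⟩^{-s} for all w, z ∈ ℝ^{2d}. -/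
/-!
Peetre's inequality `⟨a + b⟩ ≤ √2 ⟨a⟩ ⟨b⟩` and the Lipschitz bound on `χ₁` give
`⟨z - χ₁ (χ₂ w)⟩ ≤ M ⟨z - χ₁ u⟩ ⟨u - χ₂ w⟩` with `M = √2 max 1 K`. Applying the decay
hypotheses with exponent `s' = s + r`, `r > 2d`, the factor `⟨·⟩^{-s}` of both kernels is
traded for `M^s ⟨z - χ₁ (χ₂ w)⟩^{-s}`, and the remaining `⟨u - χ₂ w⟩^{-r}` is integrable
in `u` with an integral independent of `w`.
-/

open Real MeasureTheory

noncomputable section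

section JapaneseBracket

variable {n : ℕ}

lemma one_le_jap (z : EuclideanSpace ℝ (Fin n)) : 1 ≤ jap z :=
  Real.one_le_sqrt.mpr (le_add_of_nonneg_right (by positivity))

lemma jap_pos (z : EuclideanSpace ℝ (Fin n)) : 0 < jap z :=
  one_pos.trans_le (one_le_jap z)

lemma jap_add_le (a b : EuclideanSpace ℝ (Fin n)) :
    jap (a + b) ≤ Real.sqrt 2 * jap a * jap b := by
  rw [jap, jap, jap, ← Real.sqrt_mul (by norm_num), ← Real.sqrt_mul (by positivity)]
  apply Real.sqrt_le_sqrt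
  have h : ‖a + b‖ ^ 2 ≤ (‖a‖ + ‖b‖) ^ 2 := by gcongr; exact norm_add_le a b
  nlinarith [sq_nonneg (‖a‖ - ‖b‖), sq_nonneg (‖a‖ * ‖b‖)]

lemma LipschitzWith.jap_sub_le {K : NNReal}
    {χ : EuclideanSpace ℝ (Fin n) → EuclideanSpace ℝ (Fin n)}
    (hχ : LipschitzWith K χ) (u v : EuclideanSpace ℝ (Fin n)) :
    jap (χ u - χ v) ≤ max 1 (K : ℝ) * jap (u - v) := by
  have hm : 1 ≤ max 1 (K : ℝ) := le_max_left _ _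
  rw [jap, jap, ← Real.sqrt_sq (zero_le_one.trans hm), ← Real.sqrt_mul (by positivity)]
  apply Real.sqrt_le_sqrt
  have h : ‖χ u - χ v‖ ≤ max 1 (K : ℝ) * ‖u - v‖ :=
    (hχ.norm_sub_le u v).trans (by gcongr; exact le_max_right _ _)
  have h2 : ‖χ u - χ v‖ ^ 2 ≤ (max 1 (K : ℝ) * ‖u - v‖) ^ 2 := by gcongr
  nlinarith

lemma integrable_jap_rpow_neg {r : ℝ} (hr : (n : ℝ) < r) :
    Integrable (fun u : EuclideanSpace ℝ (Fin n) => jap u ^ (-r)) := by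
  have h : ∀ u : EuclideanSpace ℝ (Fin n), jap u ^ (-r) = (1 + ‖u‖ ^ 2) ^ (-r / 2) := by
    intro u
    rw [jap, Real.sqrt_eq_rpow, ← Real.rpow_mul (by positivity)]
    ring_nf
  simp_rw [h]
  exact integrable_rpow_neg_one_add_norm_sq (by simpa using hr)

end JapaneseBracket

lemma Real.rpow_neg_le_mul_rpow_neg_of_le_mul {x y M s : ℝ} (hx : 0 < x) (hy : 0 < y)
    (hs : 0 ≤ s) (h : y ≤ M * x) : x ^ (-s) ≤ M ^ s * y ^ (-s) := by
  have hM : 0 < M := pos_of_mul_pos_left (hy.trans_le h) hx.le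
  have hxy : x⁻¹ ≤ M * y⁻¹ := by
    rw [← div_eq_mul_inv, le_div_iff₀ hy, ← div_eq_inv_mul, div_le_iff₀ hx]
    exact h
  rw [Real.rpow_neg hx.le, Real.rpow_neg hy.le, ← Real.inv_rpow hx.le, ← Real.inv_rpow hy.le,
    ← Real.mul_rpow hM.le (by positivity)]
  exact Real.rpow_le_rpow (by positivity) hxy hs

section Composition

variable {n : ℕ}

lemma LipschitzWith.jap_rpow_neg_mul_le {K : NNReal}
    {χ : EuclideanSpace ℝ (Fin n) → EuclideanSpace ℝ (Fin n)}
    (hχ : LipschitzWith K χ) {s r : ℝ} (hs : 0 ≤ s) (hr : 0 ≤ r)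
    (z u v : EuclideanSpace ℝ (Fin n)) :
    jap (z - χ u) ^ (-(s + r)) * jap (u - v) ^ (-(s + r)) ≤
      (Real.sqrt 2 * max 1 (K : ℝ)) ^ s * jap (z - χ v) ^ (-s) * jap (u - v) ^ (-r) := by
  have hA := jap_pos (z - χ u)
  have hB := jap_pos (u - v)
  have hpeetre : jap (z - χ v) ≤
      (Real.sqrt 2 * max 1 (K : ℝ)) * (jap (z - χ u) * jap (u - v)) :=
    calc jap (z - χ v) = jap ((z - χ u) + (χ u - χ v)) := by rw [sub_add_sub_cancel]
      _ ≤ Real.sqrt 2 * jap (z - χ u) * jap (χ u - χ v) := jap_add_le _ _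
      _ ≤ Real.sqrt 2 * jap (z - χ u) * (max 1 (K : ℝ) * jap (u - v)) := by
          gcongr; exact hχ.jap_sub_le u v
      _ = _ := by ring
  have hdecay := Real.rpow_neg_le_mul_rpow_neg_of_le_mul (mul_pos hA hB) (jap_pos _) hs hpeetre
  have hA_r : jap (z - χ u) ^ (-r) ≤ 1 :=
    Real.rpow_le_one_of_one_le_of_nonpos (one_le_jap _) (neg_nonpos.mpr hr)
  calc jap (z - χ u) ^ (-(s + r)) * jap (u - v) ^ (-(s + r))
      = (jap (z - χ u) * jap (u - v)) ^ (-s) * jap (z - χ u) ^ (-r) * jap (u - v) ^ (-r) := by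
        rw [neg_add, Real.rpow_add hA, Real.rpow_add hB, Real.mul_rpow hA.le hB.le]; ring
    _ ≤ ((Real.sqrt 2 * max 1 (K : ℝ)) ^ s * jap (z - χ v) ^ (-s)) * 1 * jap (u - v) ^ (-r) := by
        gcongr
        exact (Real.rpow_nonneg (mul_pos hA hB).le _).trans hdecay
    _ = _ := by ring

lemma norm_integral_le_of_norm_le_jap_rpow_neg {E : Type*} [NormedAddCommGroup E]
    [NormedSpace ℝ E] {F : EuclideanSpace ℝ (Fin n) → E} {c r : ℝ} (hr : (n : ℝ) < r)
    (v : EuclideanSpace ℝ (Fin n)) (hF : ∀ u, ‖F u‖ ≤ c * jap (u - v) ^ (-r)) :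
    ‖∫ u, F u‖ ≤ c * ∫ u : EuclideanSpace ℝ (Fin n), jap u ^ (-r) := by
  calc ‖∫ u, F u‖ ≤ ∫ u, c * jap (u - v) ^ (-r) :=
        norm_integral_le_of_norm_le
          (((integrable_jap_rpow_neg hr).comp_sub_right v).const_mul c)
          (Filter.Eventually.of_forall hF)
    _ = c * ∫ u, jap u ^ (-r) := by
        rw [integral_const_mul, integral_sub_right_eq_self (fun u => jap u ^ (-r)) v]

lemma norm_integral_mul_le_of_decay {K : NNReal}
    {χ₁ χ₂ : EuclideanSpace ℝ (Fin n) → EuclideanSpace ℝ (Fin n)} (hχ₁ : LipschitzWith K χ₁)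
    {k₁ k₂ : EuclideanSpace ℝ (Fin n) × EuclideanSpace ℝ (Fin n) → ℂ} {C₁ C₂ s r : ℝ}
    (hs : 0 ≤ s) (hr : (n : ℝ) < r) (hC₁ : 0 ≤ C₁) (hC₂ : 0 ≤ C₂)
    (hk₁ : ∀ w z, ‖k₁ (w, z)‖ ≤ C₁ * jap (z - χ₁ w) ^ (-(s + r)))
    (hk₂ : ∀ w z, ‖k₂ (w, z)‖ ≤ C₂ * jap (z - χ₂ w) ^ (-(s + r))) (w z) :
    ‖∫ u, k₁ (u, z) * k₂ (w, u)‖ ≤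
      C₁ * C₂ * (Real.sqrt 2 * max 1 (K : ℝ)) ^ s * jap (z - χ₁ (χ₂ w)) ^ (-s) *
        ∫ u : EuclideanSpace ℝ (Fin n), jap u ^ (-r) := by
  refine norm_integral_le_of_norm_le_jap_rpow_neg hr (χ₂ w) fun u => ?_
  calc ‖k₁ (u, z) * k₂ (w, u)‖
      ≤ C₁ * jap (z - χ₁ u) ^ (-(s + r)) * (C₂ * jap (u - χ₂ w) ^ (-(s + r))) := by
        rw [norm_mul]
        exact mul_le_mul (hk₁ u z) (hk₂ w u) (norm_nonneg _)
          (mul_nonneg hC₁ (Real.rpow_pos_of_pos (jap_pos _) _).le)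
    _ = C₁ * C₂ * (jap (z - χ₁ u) ^ (-(s + r)) * jap (u - χ₂ w) ^ (-(s + r))) := by ring
    _ ≤ C₁ * C₂ * ((Real.sqrt 2 * max 1 (K : ℝ)) ^ s * jap (z - χ₁ (χ₂ w)) ^ (-s) *
          jap (u - χ₂ w) ^ (-r)) :=
        mul_le_mul_of_nonneg_left
          (hχ₁.jap_rpow_neg_mul_le hs ((Nat.cast_nonneg n).trans hr.le) z u (χ₂ w))
          (mul_nonneg hC₁ hC₂)
    _ = _ := by ring

end Composition

theorem statement9 (d : ℕ) (K K' : NNReal) (s : ℝ) (hs : 0 ≤ s) :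
    ∃ s' : ℝ, s ≤ s' ∧ ∃ C₀ : ℝ, 0 < C₀ ∧
      ∀ (χ₁ χ₂ ψ₁ : EuclideanSpace ℝ (Fin (2 * d)) → EuclideanSpace ℝ (Fin (2 * d))),
        LipschitzWith K χ₁ → LipschitzWith K' ψ₁ →
        Function.LeftInverse ψ₁ χ₁ → Function.RightInverse ψ₁ χ₁ →
        Function.Bijective χ₂ →
        (∃ K₂ : NNReal, LipschitzWith K₂ χ₂) →
        (∃ ψ₂, Function.LeftInverse ψ₂ χ₂ ∧ Function.RightInverse ψ₂ χ₂ ∧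
          ∃ K₂' : NNReal, LipschitzWith K₂' ψ₂) →
        ∀ k₁ k₂ : EuclideanSpace ℝ (Fin (2 * d)) × EuclideanSpace ℝ (Fin (2 * d)) → ℂ,
          Measurable k₁ → Measurable k₂ →
          ∀ C₁ C₂ : ℝ → ℝ, (∀ σ, 0 ≤ σ → 0 ≤ C₁ σ) → (∀ σ, 0 ≤ σ → 0 ≤ C₂ σ) →
          (∀ σ, 0 ≤ σ → ∀ w z, ‖k₁ (w, z)‖ ≤ C₁ σ * jap (z - χ₁ w) ^ (-σ)) →
          (∀ σ, 0 ≤ σ → ∀ w z, ‖k₂ (w, z)‖ ≤ C₂ σ * jap (z - χ₂ w) ^ (-σ)) →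
          ∀ w z, ‖∫ u, k₁ (u, z) * k₂ (w, u)‖ ≤
            C₀ * C₁ s' * C₂ s' * jap (z - χ₁ (χ₂ w)) ^ (-s) := by
  set r : ℝ := 2 * d + 1
  have hr : ((2 * d : ℕ) : ℝ) < r := by push_cast; linarith
  set M : ℝ := Real.sqrt 2 * max 1 (K : ℝ)
  set I : ℝ := ∫ u : EuclideanSpace ℝ (Fin (2 * d)), jap u ^ (-r)
  have hI : 0 ≤ I := integral_nonneg fun u => (Real.rpow_pos_of_pos (jap_pos u) _).le
  -- `I + 1` rather than `I` gives `C₀ > 0` without proving `I > 0`.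
  refine ⟨s + r, by linarith, M ^ s * (I + 1), by positivity,
    fun χ₁ χ₂ _ hχ₁ _ _ _ _ _ _ k₁ k₂ _ _ C₁ C₂ hC₁ hC₂ hk₁ hk₂ w z => ?_⟩
  have hs' : 0 ≤ s + r := by positivity
  have hC : 0 ≤ C₁ (s + r) * C₂ (s + r) * M ^ s * jap (z - χ₁ (χ₂ w)) ^ (-s) :=
    mul_nonneg (by have := hC₁ _ hs'; have := hC₂ _ hs'; positivity)
      (Real.rpow_pos_of_pos (jap_pos _) _).le
  calc ‖∫ u, k₁ (u, z) * k₂ (w, u)‖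
      ≤ C₁ (s + r) * C₂ (s + r) * M ^ s * jap (z - χ₁ (χ₂ w)) ^ (-s) * I :=
        norm_integral_mul_le_of_decay hχ₁ hs hr (hC₁ _ hs') (hC₂ _ hs')
          (hk₁ _ hs') (hk₂ _ hs') w z
    _ ≤ C₁ (s + r) * C₂ (s + r) * M ^ s * jap (z - χ₁ (χ₂ w)) ^ (-s) * (I + 1) := by
        gcongr; linarith
    _ = _ := by ring
end
end
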